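/- arXiv:1812.08217 — 3 statements merged into one kernel-verified Lean document; each statement's English description precedes it below -/
import Mathlib

section
/- For any two probability density functions q0 and q1 with respect to a common dominating measure μ, one has ∫ min(q0,q1) dμ ≥ 1 - (1/2)·(∫ q0²/q1 dμ - 1)^{1/2}. -/
/-!
Writing `min q0 q1 = (q0 + q1 - |q0 - q1|) / 2` gives `∫ min q0 q1 = 1 - ½ ∫ |q0 - q1|`.
By Cauchy–Schwarz with weight `q1`, applied to `|q0 - q1| = (|q0 - q1| / √q1) · √q1`,
`∫ |q0 - q1| ≤ √(∫ (q0 - q1)² / q1) · √(∫ q1)`, and the χ²-divergence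
`∫ (q0 - q1)² / q1` expands to `∫ q0² / q1 - 1`.
-/

open MeasureTheory

section

variable {Ω : Type*} [MeasurableSpace Ω] {μ : Measure Ω}

lemma integral_min_eq {f g : Ω → ℝ} (hf : Integrable f μ) (hg : Integrable g μ) :
    ∫ ω, min (f ω) (g ω) ∂μ = (∫ ω, f ω ∂μ + ∫ ω, g ω ∂μ - ∫ ω, |f ω - g ω| ∂μ) / 2 := by
  have hpt : ∀ ω, min (f ω) (g ω) = (f ω + g ω - |f ω - g ω|) / 2 := fun ω => by
    linarith [min_add_max (f ω) (g ω), max_sub_min_eq_abs' (f ω) (g ω)]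
  have hsum : Integrable (fun ω => f ω + g ω) μ := hf.add hg
  have hdist : Integrable (fun ω => |f ω - g ω|) μ := (hf.sub hg).abs
  simp_rw [hpt]
  rw [integral_div, integral_sub hsum hdist, integral_add hf hg]

lemma integral_abs_le_sqrt_integral_sq_div_mul_sqrt_integral {f w : Ω → ℝ}
    (hw : ∀ᵐ ω ∂μ, 0 < w ω) (hf : AEStronglyMeasurable f μ) (hw_int : Integrable w μ)
    (hfw : Integrable (fun ω => f ω ^ 2 / w ω) μ) :
    ∫ ω, |f ω| ∂μ ≤ √(∫ ω, f ω ^ 2 / w ω ∂μ) * √(∫ ω, w ω ∂μ) := by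
  set u : Ω → ℝ := fun ω => |f ω| / √(w ω)
  set v : Ω → ℝ := fun ω => √(w ω)
  have hv_meas : AEStronglyMeasurable v μ :=
    Real.continuous_sqrt.comp_aestronglyMeasurable hw_int.aestronglyMeasurable
  have huv : (fun ω => u ω * v ω) =ᵐ[μ] fun ω => |f ω| := by
    filter_upwards [hw] with ω hω
    exact div_mul_cancel₀ _ (Real.sqrt_pos.2 hω).ne'
  have hu_sq : (fun ω => u ω ^ (2 : ℝ)) =ᵐ[μ] fun ω => f ω ^ 2 / w ω := by
    filter_upwards [hw] with ω hω
    simp only [u, Real.rpow_two, div_pow, sq_abs, Real.sq_sqrt hω.le]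
  have hv_sq : (fun ω => v ω ^ (2 : ℝ)) =ᵐ[μ] w := by
    filter_upwards [hw] with ω hω
    simp only [v, Real.rpow_two, Real.sq_sqrt hω.le]
  have hu_meas : AEStronglyMeasurable u μ := hf.norm.div₀ hv_meas
  have hu : MemLp u (ENNReal.ofReal 2) μ := by
    rw [ENNReal.ofReal_ofNat, memLp_two_iff_integrable_sq hu_meas]
    simpa only [Real.rpow_two] using hfw.congr hu_sq.symm
  have hv : MemLp v (ENNReal.ofReal 2) μ := by
    rw [ENNReal.ofReal_ofNat, memLp_two_iff_integrable_sq hv_meas]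
    simpa only [Real.rpow_two] using hw_int.congr hv_sq.symm
  have holder := integral_mul_le_Lp_mul_Lq_of_nonneg Real.HolderConjugate.two_two
    (.of_forall fun ω => by positivity) (.of_forall fun ω => Real.sqrt_nonneg _) hu hv
  rwa [integral_congr_ae huv, integral_congr_ae hu_sq, integral_congr_ae hv_sq,
    ← Real.sqrt_eq_rpow, ← Real.sqrt_eq_rpow] at holder

variable {p q : Ω → ℝ}

lemma sub_sq_div_ae_eq (hq : ∀ᵐ ω ∂μ, q ω ≠ 0) :
    (fun ω => (p ω - q ω) ^ 2 / q ω) =ᵐ[μ] fun ω => p ω ^ 2 / q ω - 2 * p ω + q ω := by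
  filter_upwards [hq] with ω hω
  field_simp
  ring

lemma integrable_sub_sq_div (hq : ∀ᵐ ω ∂μ, q ω ≠ 0) (hp_int : Integrable p μ)
    (hq_int : Integrable q μ) (hpq : Integrable (fun ω => p ω ^ 2 / q ω) μ) :
    Integrable (fun ω => (p ω - q ω) ^ 2 / q ω) μ :=
  ((hpq.sub (hp_int.const_mul 2)).add hq_int).congr (sub_sq_div_ae_eq hq).symm

lemma integral_sub_sq_div (hq : ∀ᵐ ω ∂μ, q ω ≠ 0) (hp_int : Integrable p μ)
    (hq_int : Integrable q μ) (hpq : Integrable (fun ω => p ω ^ 2 / q ω) μ) :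
    ∫ ω, (p ω - q ω) ^ 2 / q ω ∂μ
      = ∫ ω, p ω ^ 2 / q ω ∂μ - 2 * ∫ ω, p ω ∂μ + ∫ ω, q ω ∂μ := by
  have hp_two : Integrable (fun ω => 2 * p ω) μ := hp_int.const_mul 2
  have hpq_sub : Integrable (fun ω => p ω ^ 2 / q ω - 2 * p ω) μ := hpq.sub hp_two
  rw [integral_congr_ae (sub_sq_div_ae_eq hq), integral_add hpq_sub hq_int,
    integral_sub hpq hp_two, integral_const_mul]

end

theorem stmt0_general {Ω : Type*} [MeasurableSpace Ω] (μ : Measure Ω)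
    (q0 q1 : Ω → ℝ)
    (h1pos : ∀ᵐ ω ∂μ, 0 < q1 ω)
    (hi0 : Integrable q0 μ) (hi1 : Integrable q1 μ)
    (hint : Integrable (fun ω => (q0 ω) ^ 2 / q1 ω) μ)
    (hq0 : ∫ ω, q0 ω ∂μ = 1) (hq1 : ∫ ω, q1 ω ∂μ = 1) :
    1 - (1 / 2) * Real.sqrt ((∫ ω, (q0 ω) ^ 2 / q1 ω ∂μ) - 1)
      ≤ ∫ ω, min (q0 ω) (q1 ω) ∂μ := by
  have hq1_ne : ∀ᵐ ω ∂μ, q1 ω ≠ 0 := h1pos.mono fun _ h => h.ne'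
  have hchi : ∫ ω, (q0 ω - q1 ω) ^ 2 / q1 ω ∂μ = ∫ ω, q0 ω ^ 2 / q1 ω ∂μ - 1 := by
    rw [integral_sub_sq_div hq1_ne hi0 hi1 hint, hq0, hq1]
    ring
  have htv := integral_abs_le_sqrt_integral_sq_div_mul_sqrt_integral
    (f := fun ω => q0 ω - q1 ω) h1pos (hi0.sub hi1).aestronglyMeasurable hi1 (integrable_sub_sq_div hq1_ne hi0 hi1 hint)
  rw [hchi, hq1, Real.sqrt_one, mul_one] at htv
  rw [integral_min_eq hi0 hi1, hq0, hq1]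
  linarith

/-- For probability densities q0, q1 w.r.t. a common dominating measure μ,
∫ min(q0,q1) dμ ≥ 1 - (1/2)·(∫ q0²/q1 dμ - 1)^{1/2}. -/
theorem stmt0 {Ω : Type*} [MeasurableSpace Ω] (μ : Measure Ω)
    (q0 q1 : Ω → ℝ)
    (h0 : ∀ ω, 0 ≤ q0 ω) (h1 : ∀ ω, 0 ≤ q1 ω)
    (h1pos : ∀ᵐ ω ∂μ, 0 < q1 ω)
    (hi0 : Integrable q0 μ) (hi1 : Integrable q1 μ)
    (hint : Integrable (fun ω => (q0 ω) ^ 2 / q1 ω) μ)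
    (hq0 : ∫ ω, q0 ω ∂μ = 1) (hq1 : ∫ ω, q1 ω ∂μ = 1) :
    1 - (1 / 2) * Real.sqrt ((∫ ω, (q0 ω) ^ 2 / q1 ω ∂μ) - 1)
      ≤ ∫ ω, min (q0 ω) (q1 ω) ∂μ :=
  stmt0_general μ q0 q1 h1pos hi0 hi1 hint hq0 hq1
end

section
/- Let σ̂_{i,j} be estimators of σ_{i,j} and define the thresholded values σ̃_{i,j} = σ̂_{i,j}·1{|σ̂_{i,j}| ≥ β t}. Suppose for each (i,j) that |σ̂_{i,j} - σ_{i,j}| ≤ 4 min{|σ_{i,j}|, α t} and the true matrix satisfies ∑_j |σ_{i,j}|^q ≤ c_p for each i, with 0 ≤ q < 1 and α > 0. Then max_i ∑_{j} |σ̃_{i,j} - σ_{i,j}| ≤ 8 α^{1-q} c_p t^{1-q}. -/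
/-! Interpolating, `min (|σ|, α t) ≤ |σ| ^ q (α t) ^ (1 - q)`, so each row error is at most
`4 (α t) ^ (1 - q) ∑ⱼ |σ i j| ^ q ≤ 4 (α t) ^ (1 - q) c_p`, half the claimed bound. -/

open Finset

lemma min_le_rpow_mul_rpow {a b q : ℝ} (ha : 0 ≤ a) (hb : 0 ≤ b) (hq0 : 0 ≤ q) (hq1 : q ≤ 1) :
    min a b ≤ a ^ q * b ^ (1 - q) := by
  have hm : 0 ≤ min a b := le_min ha hb
  calc min a b = min a b ^ q * min a b ^ (1 - q) := by
        rw [← Real.rpow_add' hm (by linarith), add_sub_cancel, Real.rpow_one]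
    _ ≤ a ^ q * b ^ (1 - q) :=
        mul_le_mul (Real.rpow_le_rpow hm (min_le_left a b) hq0)
          (Real.rpow_le_rpow hm (min_le_right a b) (sub_nonneg.2 hq1)) (by positivity)
          (by positivity)

lemma sum_abs_le_of_abs_le_mul_min {ι : Type*} [Fintype ι] {e s : ι → ℝ} {K c q : ℝ}
    (hK : 0 ≤ K) (hc : 0 ≤ c) (hq0 : 0 ≤ q) (hq1 : q ≤ 1)
    (he : ∀ j, |e j| ≤ K * min |s j| c) :
    ∑ j, |e j| ≤ K * c ^ (1 - q) * ∑ j, |s j| ^ q := by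
  rw [mul_sum]
  refine sum_le_sum fun j _ => ?_
  calc |e j| ≤ K * min |s j| c := he j
    _ ≤ K * (|s j| ^ q * c ^ (1 - q)) :=
        mul_le_mul_of_nonneg_left (min_le_rpow_mul_rpow (abs_nonneg _) hc hq0 hq1) hK
    _ = K * c ^ (1 - q) * |s j| ^ q := by ring

theorem stmt9_general (p : ℕ) (S tilde : Matrix (Fin p) (Fin p) ℝ) (q cp t α : ℝ)
    (hq0 : 0 ≤ q) (hq1 : q < 1) (ht : 0 < t) (hα : 0 < α)
    (hrow : ∀ i, ∑ j : Fin p, |S i j| ^ q ≤ cp)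
    (herr : ∀ i j, |tilde i j - S i j| ≤ 4 * min |S i j| (α * t)) :
    ∀ i, ∑ j : Fin p, |tilde i j - S i j| ≤ 8 * α ^ (1 - q) * cp * t ^ (1 - q) := by
  intro i
  have hmass : 0 ≤ ∑ j : Fin p, |S i j| ^ q := sum_nonneg fun j _ => by positivity
  calc ∑ j : Fin p, |tilde i j - S i j|
      ≤ 4 * (α * t) ^ (1 - q) * ∑ j : Fin p, |S i j| ^ q :=
        sum_abs_le_of_abs_le_mul_min (by norm_num) (by positivity) hq0 hq1.le (herr i)
    _ ≤ 8 * (α * t) ^ (1 - q) * cp := by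
        gcongr
        · norm_num
        · exact hrow i
    _ = 8 * α ^ (1 - q) * cp * t ^ (1 - q) := by rw [Real.mul_rpow hα.le ht.le]; ring

/-- thresholded estimator σ̃_{i,j} = σ̂_{i,j}·1{|σ̂_{i,j}| ≥ β t}; if
|σ̃_{i,j} - σ_{i,j}| ≤ 4 min{|σ_{i,j}|, α t} entrywise and rows of σ have ℓ^q norm at most
c_p (0 ≤ q < 1), then every row-sum error of σ̃ is at most 8 α^{1-q} c_p t^{1-q}. -/
theorem stmt9 (p : ℕ) (hatS S tilde : Matrix (Fin p) (Fin p) ℝ) (q cp t α β : ℝ)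
    (hq0 : 0 ≤ q) (hq1 : q < 1) (ht : 0 < t) (hα : 0 < α)
    (hrow : ∀ i, ∑ j : Fin p, |S i j| ^ q ≤ cp)
    (htilde : ∀ i j, tilde i j = if β * t ≤ |hatS i j| then hatS i j else 0)
    (herr : ∀ i j, |tilde i j - S i j| ≤ 4 * min |S i j| (α * t)) :
    ∀ i, ∑ j : Fin p, |tilde i j - S i j| ≤ 8 * α ^ (1 - q) * cp * t ^ (1 - q) :=
  stmt9_general p S tilde q cp t α hq0 hq1 ht hα hrow herr
end

section
/- Le Cam's lemma: Let T be any estimator of θ based on an observation Z ~ P_θ with θ ∈ Θ = {θ₀, θ₁, …, θ_D}, let L be a loss function with l_min = min_{1≤d≤D} inf_t (L(t,θ₀) + L(t,θ_d)), and let P̄ = D^{-1} ∑_{d=1}^D P_{θ_d}. Then sup_{θ∈Θ} E_{Z|θ}[L(T(Z), θ)] ≥ (1/2) l_min ‖P_{θ₀} ∧ P̄‖, where ‖Q₀ ∧ Q₁‖ = ∫ min(q₀, q₁) dμ for densities q₀, q₁ with respect to a common dominating measure. -/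
open MeasureTheory

/-- Le Cam's lemma: for any estimator T of θ ∈ Θ = {θ₀,…,θ_D} based on
Z ~ P_θ (with densities q_θ w.r.t. μ), loss L with
l_min ≤ L(t,θ₀) + L(t,θ_d) for all t and d ≥ 1, and P̄ = D⁻¹ ∑_{d=1}^D P_{θ_d},
sup_θ E_{Z|θ}[L(T(Z),θ)] ≥ (1/2) l_min ∫ min(q₀, q̄) dμ. -/
theorem stmt15 {𝒵 : Type*} [MeasurableSpace 𝒵] (μ : Measure 𝒵)
    (D : ℕ) (hD : 1 ≤ D)
    (q : Fin (D + 1) → 𝒵 → ℝ)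
    (hq0 : ∀ d z, 0 ≤ q d z)
    (hqi : ∀ d, Integrable (q d) μ)
    (hq1 : ∀ d, ∫ z, q d z ∂μ = 1)
    {A : Type*} (L : A → Fin (D + 1) → ℝ)
    (hL : ∀ a d, 0 ≤ L a d)
    (T : 𝒵 → A)
    (lmin : ℝ)
    (hlmin : ∀ (d : Fin D) (a : A), lmin ≤ L a 0 + L a d.succ)
    (hri : ∀ d, Integrable (fun z => L (T z) d * q d z) μ)
    (hmini : Integrable
      (fun z => min (q 0 z) ((D : ℝ)⁻¹ * ∑ d : Fin D, q d.succ z)) μ) :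
    ∃ d : Fin (D + 1),
      (1 / 2) * lmin *
          ∫ z, min (q 0 z) ((D : ℝ)⁻¹ * ∑ d : Fin D, q d.succ z) ∂μ
        ≤ ∫ z, L (T z) d * q d z ∂μ := by
  have hDpos : (0:ℝ) < (D:ℝ) := by exact_mod_cast hD
  have hI0 : 0 ≤ ∫ z, min (q 0 z) ((D : ℝ)⁻¹ * ∑ d : Fin D, q d.succ z) ∂μ :=
    integral_nonneg fun z => le_min (hq0 0 z)
      (mul_nonneg (by positivity) (Finset.sum_nonneg fun d _ => hq0 _ z))
  rcases le_or_gt lmin 0 with hl | hl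
  · refine ⟨0, le_trans ?_ (integral_nonneg fun z => mul_nonneg (hL _ _) (hq0 _ _))⟩
    nlinarith
  by_contra hcon
  push_neg at hcon
  set B := (1 / 2) * lmin * ∫ z, min (q 0 z) ((D : ℝ)⁻¹ * ∑ d : Fin D, q d.succ z) ∂μ
    with hB
  have hsumInt : Integrable (fun z => (D:ℝ)⁻¹ * ∑ d : Fin D, L (T z) d.succ * q d.succ z) μ :=
    (integrable_finset_sum _ (fun d _ => hri d.succ)).const_mul _
  have key : lmin * ∫ z, min (q 0 z) ((D : ℝ)⁻¹ * ∑ d : Fin D, q d.succ z) ∂μ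
      ≤ ∫ z, (L (T z) 0 * q 0 z
        + (D:ℝ)⁻¹ * ∑ d : Fin D, L (T z) d.succ * q d.succ z) ∂μ := by
    rw [← integral_const_mul]
    refine integral_mono (hmini.const_mul lmin) ((hri 0).add hsumInt) ?_
    intro z
    show lmin * _ ≤ _
    set a := L (T z) 0 with ha
    have haz : 0 ≤ a := hL _ _
    have hq0z := hq0 0 z
    have hqbarz : 0 ≤ (D:ℝ)⁻¹ * ∑ d : Fin D, q d.succ z :=
      mul_nonneg (by positivity) (Finset.sum_nonneg fun d _ => hq0 _ z)
    set m := min (q 0 z) ((D:ℝ)⁻¹ * ∑ d : Fin D, q d.succ z) with hm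
    have hm1 : m ≤ q 0 z := min_le_left _ _
    have hm2 : m ≤ (D:ℝ)⁻¹ * ∑ d : Fin D, q d.succ z := min_le_right _ _
    have hm0 : 0 ≤ m := le_min hq0z hqbarz
    rcases le_or_gt lmin a with h | h
    · have h1 : lmin * m ≤ a * q 0 z :=
        le_trans (mul_le_mul_of_nonneg_left hm1 hl.le)
          (mul_le_mul_of_nonneg_right h hq0z)
      have h2 : 0 ≤ (D:ℝ)⁻¹ * ∑ d : Fin D, L (T z) d.succ * q d.succ z :=
        mul_nonneg (by positivity)
          (Finset.sum_nonneg fun d _ => mul_nonneg (hL _ _) (hq0 _ _))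
      linarith
    · have h1 : ∀ d : Fin D, (lmin - a) * q d.succ z ≤ L (T z) d.succ * q d.succ z :=
        fun d => mul_le_mul_of_nonneg_right (by linarith [hlmin d (T z)]) (hq0 _ _)
      have h2 : (lmin - a) * ∑ d : Fin D, q d.succ z
          ≤ ∑ d : Fin D, L (T z) d.succ * q d.succ z := by
        rw [Finset.mul_sum]; exact Finset.sum_le_sum fun d _ => h1 d
      have hDinv : (0:ℝ) ≤ (D:ℝ)⁻¹ := by positivity
      have h3 := mul_le_mul_of_nonneg_left h2 hDinv
      have h4 := mul_le_mul_of_nonneg_left hm1 haz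
      have h5 := mul_le_mul_of_nonneg_left hm2 (by linarith : (0:ℝ) ≤ lmin - a)
      nlinarith
  rw [integral_add (hri 0) hsumInt, integral_const_mul, integral_finset_sum _
    (fun d _ => hri d.succ)] at key
  have hR0 : ∫ z, L (T z) 0 * q 0 z ∂μ < B := hcon 0
  have hsum : ∑ d : Fin D, ∫ z, L (T z) d.succ * q d.succ z ∂μ < (D:ℝ) * B := by
    calc ∑ d : Fin D, ∫ z, L (T z) d.succ * q d.succ z ∂μ
        < ∑ _d : Fin D, B := by
          refine Finset.sum_lt_sum_of_nonempty ?_ fun d _ => hcon d.succ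
          exact Finset.univ_nonempty_iff.mpr ⟨⟨0, hD⟩⟩
      _ = (D:ℝ) * B := by simp [mul_comm]
  have h6 : (D:ℝ)⁻¹ * ∑ d : Fin D, ∫ z, L (T z) d.succ * q d.succ z ∂μ < B := by
    have := mul_lt_mul_of_pos_left hsum (inv_pos.mpr hDpos)
    rwa [← mul_assoc, inv_mul_cancel₀ hDpos.ne', one_mul] at this
  have : lmin * ∫ z, min (q 0 z) ((D : ℝ)⁻¹ * ∑ d : Fin D, q d.succ z) ∂μ < 2 * B := by
    linarith
  rw [hB] at this
  linarith
end
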